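/- arXiv:1702.04935 — 10 statements merged into one kernel-verified Lean document; each statement's English description precedes it below -/
import Mathlib

section
/- Two quaternions q and q' are congruent (i.e., there exists a nonzero quaternion h with q' = h q h^{-1}) if and only if Re(q) = Re(q') and |q| = |q'|. -/
/-!
Conjugation preserves the real part, since `re` is a trace (`re (a * b) = re (b * a)`), and the
norm, which is multiplicative. Conversely, if `q` and `q'` have the same real part and norm, both
are roots of `x² - 2 re(q) x + |q|²`, and this makes `h = q' - q̄` satisfy `h q = q' h`. This `h`
vanishes only when `q' = q̄`; then any nonzero pure imaginary `h` orthogonal to `Im q` works,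
because it anticommutes with `Im q`.
-/

namespace Quaternion

variable {R : Type*}

section CommRing

variable [CommRing R]

theorem re_mul_comm (a b : ℍ[R]) : (a * b).re = (b * a).re := by
  simp only [re_mul]
  ring

theorem mul_self_eq_two_re_mul_sub_normSq (a : ℍ[R]) :
    a * a = (2 * a.re : R) * a - normSq a := by
  have h := self_mul_star a
  rw [star_eq_two_re_sub, mul_sub, ← coe_commutes] at h
  rw [← h, sub_sub_cancel]

theorem sub_star_mul_eq_mul_sub_star {a b : ℍ[R]} (hre : a.re = b.re)
    (hn : normSq a = normSq b) : (b - star a) * a = b * (b - star a) := by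
  rw [sub_mul, star_mul_self, mul_sub, mul_self_eq_two_re_mul_sub_normSq, star_eq_two_re_sub,
    mul_sub, ← coe_commutes, hre, hn]
  abel

theorem mul_eq_star_mul_of_re_eq_zero {h a : ℍ[R]} (hre : h.re = 0)
    (horth : h.imI * a.imI + h.imJ * a.imJ + h.imK * a.imK = 0) : h * a = star a * h := by
  ext
  · simp only [re_mul, re_star, imI_star, imJ_star, imK_star, hre]
    linear_combination -2 * horth
  all_goals simp [hre]; ring

theorem exists_ne_zero_mul_eq_star_mul [Nontrivial R] (a : ℍ[R]) :
    ∃ h ≠ 0, h * a = star a * h := by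
  by_cases hij : a.imI = 0 ∧ a.imJ = 0
  · refine ⟨⟨0, 1, 0, 0⟩, fun h ↦ one_ne_zero (congrArg QuaternionAlgebra.imI h),
      mul_eq_star_mul_of_re_eq_zero rfl ?_⟩
    simp [hij.1, hij.2]
  · refine ⟨⟨0, -a.imJ, a.imI, 0⟩, fun h ↦ hij ⟨congrArg QuaternionAlgebra.imJ h,
      neg_eq_zero.1 (congrArg QuaternionAlgebra.imI h)⟩, mul_eq_star_mul_of_re_eq_zero rfl ?_⟩
    dsimp only
    ring

theorem exists_ne_zero_mul_eq_mul_of_re_eq_of_normSq_eq [Nontrivial R] {a b : ℍ[R]}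
    (hre : a.re = b.re) (hn : normSq a = normSq b) : ∃ h ≠ 0, h * a = b * h := by
  obtain rfl | hb := eq_or_ne b (star a)
  · exact exists_ne_zero_mul_eq_star_mul a
  · exact ⟨b - star a, sub_ne_zero.2 hb, sub_star_mul_eq_mul_sub_star hre hn⟩

end CommRing

section Field

variable [Field R] [LinearOrder R] [IsStrictOrderedRing R] {h : ℍ[R]}

theorem re_mul_mul_inv (hh : h ≠ 0) (a : ℍ[R]) : (h * a * h⁻¹).re = a.re := by
  rw [re_mul_comm, ← mul_assoc, inv_mul_cancel₀ hh, one_mul]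

theorem normSq_mul_mul_inv (hh : h ≠ 0) (a : ℍ[R]) : normSq (h * a * h⁻¹) = normSq a := by
  rw [map_mul, map_mul, normSq_inv, mul_comm (normSq h),
    mul_inv_cancel_right₀ (normSq_ne_zero.2 hh)]

end Field

theorem norm_eq_norm_iff_normSq_eq (a b : ℍ) : ‖a‖ = ‖b‖ ↔ normSq a = normSq b := by
  rw [normSq_eq_norm_mul_self, normSq_eq_norm_mul_self,
    mul_self_inj (norm_nonneg _) (norm_nonneg _)]

end Quaternion

open Quaternion

theorem quaternion_congruence_iff (q q' : Quaternion ℝ) :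
    (∃ h : Quaternion ℝ, h ≠ 0 ∧ q' = h * q * h⁻¹) ↔
      q.re = q'.re ∧ ‖q‖ = ‖q'‖ := by
  rw [norm_eq_norm_iff_normSq_eq]
  constructor
  · rintro ⟨h, hh, rfl⟩
    exact ⟨(re_mul_mul_inv hh q).symm, (normSq_mul_mul_inv hh q).symm⟩
  · rintro ⟨hre, hn⟩
    obtain ⟨h, hh, hq⟩ := exists_ne_zero_mul_eq_mul_of_re_eq_of_normSq_eq hre hn
    exact ⟨h, hh, (eq_mul_inv_iff_mul_eq₀ hh).2 hq.symm⟩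
end

section
/- Let P = L * R be a product of unilateral left quaternionic polynomials, q ∈ ℍ, and h = R(q). If h ≠ 0, then P(q) = L(h q h^{-1}) · R(q). -/
open Polynomial

private lemma conj_pow_mul (h q : Quaternion ℝ) (hne : h ≠ 0) (n : ℕ) :
    (h * q * h⁻¹) ^ n * h = h * q ^ n := by
  induction n with
  | zero => simp
  | succ n ih =>
    rw [pow_succ, pow_succ, mul_assoc, mul_assoc (h * q), inv_mul_cancel₀ hne, mul_one,
      ← mul_assoc, ← mul_assoc, ih, mul_assoc]

theorem eval_mul_of_right_ne_zero (L R : Polynomial (Quaternion ℝ)) (q : Quaternion ℝ)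
    (h : Quaternion ℝ) (hh : h = R.eval q) (hne : h ≠ 0) :
    (L * R).eval q = L.eval (h * q * h⁻¹) * R.eval q := by
  induction L using Polynomial.induction_on' with
  | add p r hp hr => simp [add_mul, hp, hr]
  | monomial n a =>
    have hX : (monomial n a) * R = C a * R * X ^ n := by
      rw [← C_mul_X_pow_eq_monomial, X_pow_mul_assoc]
    rw [hX, eval_mul_X_pow, eval_C_mul, eval_monomial, ← hh, mul_assoc,
      mul_assoc, conj_pow_mul h q hne n]
end

section
/- Let P = L * R with L, R ∈ ℍ[x] and q ∈ ℍ. If q is a zero of P but not a zero of R, then h q h^{-1} is a zero of L, where h = R(q). -/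
open Polynomial

lemma Xpow_mul_eval (R : Polynomial (Quaternion ℝ)) (q : Quaternion ℝ)
    (hR : R.eval q ≠ 0) (n : ℕ) :
    (X ^ n * R).eval q = (R.eval q * q * (R.eval q)⁻¹) ^ n * R.eval q := by
  induction n with
  | zero => simp
  | succ n ih =>
    have : X ^ (n + 1) * R = (X ^ n * R) * X := by
      rw [pow_succ, mul_assoc, X_mul, ← mul_assoc]
    rw [this, eval_mul_X, ih, pow_succ]
    simp [mul_assoc, inv_mul_cancel₀ hR]

lemma mul_eval_noncomm (L R : Polynomial (Quaternion ℝ)) (q : Quaternion ℝ)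
    (hR : R.eval q ≠ 0) :
    (L * R).eval q = L.eval (R.eval q * q * (R.eval q)⁻¹) * R.eval q := by
  induction L using Polynomial.induction_on' with
  | add p r hp hr => rw [add_mul, eval_add, hp, hr, eval_add, add_mul]
  | monomial n a =>
    rw [eval_monomial, ← C_mul_X_pow_eq_monomial, mul_assoc, eval_C_mul,
      Xpow_mul_eval R q hR n, ← mul_assoc]

theorem left_factor_root (L R : Polynomial (Quaternion ℝ)) (q : Quaternion ℝ)
    (hP : (L * R).eval q = 0) (hR : R.eval q ≠ 0) :
    L.eval (R.eval q * q * (R.eval q)⁻¹) = 0 := by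
  have := mul_eval_noncomm L R q hR
  rw [hP] at this
  exact (mul_eq_zero.mp this.symm).resolve_right hR
end

section
/- Every monic polynomial of degree n ≥ 1 in ℍ[x] admits a factorization into linear factors: there exist x_1, …, x_n ∈ ℍ with P(x) = (x − x_n) * (x − x_{n−1}) * ⋯ * (x − x_1). -/
/-!
Let `P̄` be `P` with conjugated coefficients. Then `N = P̄ P` has real coefficients, so by the
real fundamental theorem of algebra it has a monic real factor `m` of degree 1 or 2, which is
central in `ℍ[X]`. Write `P = r + m Q` with `deg r < deg m`; then `m ∣ r̄ r`. If `r = 0`, a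
quaternion root of `m` (a complex root, via `ℂ ↪ ℍ`) is a root of `P`. Otherwise degrees force `r`
to be linear and `r̄ r = m λ` with `λ ≠ 0`, so the root of `r` is a root of `m`, hence of `P`.

Evaluation multiplies coefficients on the left, so a root `a` of `P` yields a right factor,
`P = Q (X - a)`, and induction on the degree splits `P` completely.
-/

open Polynomial

namespace Polynomial

section Ring

variable {R : Type*} [Ring R]

theorem exists_eq_mul_X_sub_C_add_C_eval (p : R[X]) (a : R) :
    ∃ q : R[X], p = q * (X - C a) + C (p.eval a) := by
  induction p using Polynomial.recOnHorner with
  | M0 => exact ⟨0, by simp⟩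
  | MC p b _ _ ih =>
    obtain ⟨q, hq⟩ := ih
    exact ⟨q, by rw [eval_add, eval_C, C_add, ← add_assoc, ← hq]⟩
  | MX p _ ih =>
    obtain ⟨q, hq⟩ := ih
    refine ⟨q * X + C (p.eval a), ?_⟩
    rw [eval_mul_X, C_mul]
    conv_lhs => rw [hq, add_mul, mul_assoc, ← (commute_X (X - C a)).eq]
    noncomm_ring

theorem exists_eq_mul_X_sub_C_of_eval_eq_zero {p : R[X]} {a : R} (h : p.eval a = 0) :
    ∃ q : R[X], p = q * (X - C a) := by
  obtain ⟨q, hq⟩ := exists_eq_mul_X_sub_C_add_C_eval p a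
  exact ⟨q, by rwa [h, C_0, add_zero] at hq⟩

theorem eval_mul_eq_zero_of_right (p : R[X]) {q : R[X]} {a : R} (h : q.eval a = 0) :
    (p * q).eval a = 0 := by
  obtain ⟨q, rfl⟩ := exists_eq_mul_X_sub_C_of_eval_eq_zero h
  rw [← mul_assoc, eval_mul_X_sub_C]

theorem Monic.exists_eq_prod_X_sub_C
    (hR : ∀ p : R[X], 0 < p.natDegree → ∃ a, p.eval a = 0) {n : ℕ} {p : R[X]} (hp : p.Monic)
    (hdeg : p.natDegree = n) : ∃ x : Fin n → R, p = (List.ofFn fun i => X - C (x i)).prod := by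
  induction n generalizing p with
  | zero => exact ⟨Fin.elim0, by simpa using hp.natDegree_eq_zero.1 hdeg⟩
  | succ k ih =>
    nontriviality R
    obtain ⟨a, ha⟩ := hR p (by omega)
    obtain ⟨q, rfl⟩ := exists_eq_mul_X_sub_C_of_eval_eq_zero ha
    have hq : q.Monic := (monic_X_sub_C a).of_mul_monic_right hp
    have hq_deg : q.natDegree = k := by
      rw [hq.natDegree_mul (monic_X_sub_C a), natDegree_X_sub_C] at hdeg
      omega
    obtain ⟨x, rfl⟩ := ih hq hq_deg
    exact ⟨Fin.snoc x a, by
      rw [List.ofFn_succ', List.concat_eq_append, List.prod_append]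
      simp⟩

end Ring

section StarRing

variable {R : Type*} [Semiring R] [StarRing R]

noncomputable instance : Star R[X] :=
  ⟨fun p => ⟨.ofCoeff (p.toFinsupp.coeff.mapRange star (star_zero _))⟩⟩

@[simp]
theorem coeff_star (p : R[X]) (n : ℕ) : (star p).coeff n = star (p.coeff n) := rfl

noncomputable instance : StarRing R[X] where
  star_involutive p := ext fun n => by simp
  star_mul p q := ext fun n => by
    simp only [coeff_star, coeff_mul, star_sum, star_mul]
    rw [← Finset.Nat.sum_antidiagonal_swap]
    rfl
  star_add p q := ext fun n => by simp

theorem natDegree_star_le (p : R[X]) : (star p).natDegree ≤ p.natDegree :=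
  natDegree_le_iff_coeff_eq_zero.2 fun _ hN => by
    rw [coeff_star, coeff_eq_zero_of_natDegree_lt hN, star_zero]

@[simp]
theorem natDegree_star (p : R[X]) : (star p).natDegree = p.natDegree :=
  (natDegree_star_le p).antisymm (by simpa using natDegree_star_le (star p))

end StarRing

section Algebra

variable {R A : Type*} [CommSemiring R] [Semiring A] [Algebra R A]

theorem commute_map_algebraMap (p : R[X]) (q : A[X]) : Commute (p.map (algebraMap R A)) q := by
  induction p using Polynomial.induction_on' with
  | add p₁ p₂ h₁ h₂ => rw [Polynomial.map_add]; exact h₁.add_left h₂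
  | monomial n r =>
    rw [map_monomial, ← C_mul_X_pow_eq_monomial, ← Polynomial.algebraMap_apply]
    exact (Algebra.commute_algebraMap_left r q).mul_left (commute_X_pow q n)

end Algebra

theorem dvd_star_modByMonic_mul_self {R : Type*} [Ring R] [StarRing R] {m p : R[X]}
    (hm_sa : IsSelfAdjoint m) (hm : ∀ q, Commute m q) (h : m ∣ star p * p) :
    m ∣ star (p %ₘ m) * (p %ₘ m) := by
  set r := p %ₘ m
  have hpr : p - r = m * (p /ₘ m) := sub_eq_of_eq_add' (modByMonic_add_div p m).symm
  have hstar : star p - star r = star (p /ₘ m) * m := by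
    rw [← star_sub, hpr, star_mul, hm_sa.star_eq]
  have hdiff : m ∣ star p * p - star r * r := by
    have expand : star p * p - star r * r = (star p - star r) * p + star r * (p - r) := by
      noncomm_ring
    rw [expand, hstar, hpr, ← (hm _).eq, mul_assoc, ← mul_assoc (star r), ← (hm _).eq,
      mul_assoc, ← mul_add]
    exact dvd_mul_right _ _
  simpa using dvd_sub h hdiff

section DivisionRing

variable {R : Type*} [DivisionRing R]

theorem exists_eval_eq_zero_of_natDegree_eq_one {r : R[X]} (h : r.natDegree = 1) :
    ∃ w : R, r.eval w = 0 := by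
  have hc : r.coeff 1 ≠ 0 := by
    rw [← h]; exact mt leadingCoeff_eq_zero.1 (ne_zero_of_natDegree_gt (h ▸ one_pos))
  refine ⟨-((r.coeff 1)⁻¹ * r.coeff 0), ?_⟩
  rw [eq_X_add_C_of_natDegree_le_one h.le]
  simp [mul_inv_cancel_left₀ hc]

theorem eval_eq_zero_of_dvd_of_natDegree_le {m s : R[X]} {w : R} (hm : ∀ q, Commute m q)
    (hms : m ∣ s) (hs0 : s ≠ 0) (hdeg : s.natDegree ≤ m.natDegree) (hs : s.eval w = 0) :
    m.eval w = 0 := by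
  obtain ⟨t, rfl⟩ := hms
  have ht0 : t ≠ 0 := right_ne_zero_of_mul hs0
  have htC : t = C (t.coeff 0) := by
    apply eq_C_of_natDegree_eq_zero
    rw [natDegree_mul (left_ne_zero_of_mul hs0) ht0] at hdeg
    omega
  have hc : t.coeff 0 ≠ 0 := fun h0 => ht0 (by rw [htC, h0, C_0])
  rw [(hm t).eq, htC, eval_C_mul] at hs
  exact (mul_eq_zero.1 hs).resolve_left hc

end DivisionRing

theorem exists_aeval_eq_zero_of_mul_self_eq_neg_one {A : Type*} [Ring A] [Algebra ℝ A] {I : A}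
    (hI : I * I = -1) {p : ℝ[X]} (hp : p.degree ≠ 0) : ∃ a : A, aeval a p = 0 := by
  obtain ⟨z, hz⟩ := IsAlgClosed.exists_aeval_eq_zero ℂ p hp
  exact ⟨Complex.lift ⟨I, hI⟩ z, by rw [aeval_algHom_apply, hz, map_zero]⟩

end Polynomial

open scoped Quaternion

theorem Quaternion.mem_lifts_of_isSelfAdjoint {p : (ℍ)[X]} (hp : IsSelfAdjoint p) :
    p ∈ lifts (algebraMap ℝ ℍ) := by
  refine (lifts_iff_coeff_lifts p).2 fun n => ⟨(p.coeff n).re, ?_⟩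
  have hn : star (p.coeff n) = p.coeff n := by rw [← coeff_star, hp.star_eq]
  rw [Quaternion.algebraMap_def, ← Quaternion.star_eq_self.1 hn]

theorem Quaternion.isSelfAdjoint_map_algebraMap (p : ℝ[X]) :
    IsSelfAdjoint (p.map (algebraMap ℝ ℍ)) :=
  Polynomial.ext fun n => by simp [Quaternion.algebraMap_def]

theorem Quaternion.exists_eval_eq_zero_of_dvd_star_mul_self {m : ℝ[X]} (hm : m.Monic)
    (hm_pos : 0 < m.natDegree) (hm_le : m.natDegree ≤ 2) {P : (ℍ)[X]}
    (h : m.map (algebraMap ℝ ℍ) ∣ star P * P) : ∃ w : ℍ, P.eval w = 0 := by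
  set M := m.map (algebraMap ℝ ℍ)
  have hM_deg : M.natDegree = m.natDegree := natDegree_map _
  have hM_comm : ∀ q, Commute M q := commute_map_algebraMap m
  set r := P %ₘ M
  have hM : M.Monic := hm.map _
  have hr_lt : r.natDegree < M.natDegree :=
    natDegree_modByMonic_lt P hM fun h1 => by simp [h1] at hM_deg; omega
  have hr_dvd : M ∣ star r * r :=
    dvd_star_modByMonic_mul_self (isSelfAdjoint_map_algebraMap m) hM_comm h
  suffices ∃ w, M.eval w = 0 ∧ r.eval w = 0 by
    obtain ⟨w, hMw, hrw⟩ := this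
    refine ⟨w, ?_⟩
    rw [← modByMonic_add_div P M, eval_add, hrw, (hM_comm _).eq,
      eval_mul_eq_zero_of_right _ hMw, add_zero]
  by_cases hr0 : r = 0
  · have hI : (⟨0, 1, 0, 0⟩ : ℍ) * ⟨0, 1, 0, 0⟩ = -1 := by ext <;> simp
    obtain ⟨w, hw⟩ := exists_aeval_eq_zero_of_mul_self_eq_neg_one (A := ℍ) hI
      (natDegree_pos_iff_degree_pos.1 hm_pos).ne'
    exact ⟨w, by rw [eval_map_algebraMap, hw], by rw [hr0, eval_zero]⟩
  · have hrr0 : star r * r ≠ 0 := mul_ne_zero (star_ne_zero.2 hr0) hr0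
    have hrr_deg : (star r * r).natDegree = r.natDegree + r.natDegree := by
      rw [natDegree_mul (star_ne_zero.2 hr0) hr0, natDegree_star]
    have hr_one : r.natDegree = 1 := by
      by_contra hne
      exact hM.not_dvd_of_natDegree_lt hrr0 (by omega) hr_dvd
    obtain ⟨w, hw⟩ := exists_eval_eq_zero_of_natDegree_eq_one hr_one
    exact ⟨w, eval_eq_zero_of_dvd_of_natDegree_le hM_comm hr_dvd hrr0 (by omega)
      (eval_mul_eq_zero_of_right _ hw), hw⟩

theorem Quaternion.exists_eval_eq_zero {P : (ℍ)[X]} (hP : 0 < P.natDegree) :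
    ∃ w : ℍ, P.eval w = 0 := by
  have hP0 : P ≠ 0 := ne_zero_of_natDegree_gt hP
  obtain ⟨N, hN⟩ := (mem_lifts _).1 (mem_lifts_of_isSelfAdjoint (.star_mul_self P))
  have hN_deg : 0 < N.natDegree := by
    rw [← natDegree_map (algebraMap ℝ ℍ), hN, natDegree_mul (star_ne_zero.2 hP0) hP0,
      natDegree_star]
    omega
  obtain ⟨m, hm, hm_irr, hmN⟩ :=
    exists_monic_irreducible_factor N (not_isUnit_of_natDegree_pos N hN_deg)
  exact exists_eval_eq_zero_of_dvd_star_mul_self hm hm_irr.natDegree_pos hm_irr.natDegree_le_two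
    (hN ▸ Polynomial.map_dvd _ hmN)


theorem quaternion_monic_factorization_general (n : ℕ)
    (P : Polynomial (Quaternion ℝ)) (hP : P.Monic) (hdeg : P.natDegree = n) :
    ∃ x : Fin n → Quaternion ℝ,
      P = (List.ofFn fun i : Fin n => Polynomial.X - Polynomial.C (x i)).prod :=
  hP.exists_eq_prod_X_sub_C (fun _ => Quaternion.exists_eval_eq_zero) hdeg

theorem quaternion_monic_factorization (n : ℕ) (hn : 1 ≤ n)
    (P : Polynomial (Quaternion ℝ)) (hP : P.Monic) (hdeg : P.natDegree = n) :
    ∃ x : Fin n → Quaternion ℝ,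
      P = (List.ofFn fun i : Fin n => Polynomial.X - Polynomial.C (x i)).prod :=
  quaternion_monic_factorization_general n P hP hdeg
end

section
/- If P(x) = (x − x_n) * ⋯ * (x − x_1) is a factorization of a monic polynomial P ∈ ℍ[x] into linear factors, then every zero of P lies in the union of the congruence classes [x_1], …, [x_n]. -/
/-! Evaluation with coefficients on the left is not multiplicative, but it is twisted-multiplicative:
if `c = q(a)` then `(p * q)(a) = p(b) * c` for any `b` with `c * a = b * c`. Over a division ring,
a zero `a` of `p * q` is therefore a zero of `q` or, with `b = c a c⁻¹`, gives a zero of `p` conjugate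
to `a`. Peeling off the leftmost linear factor, induction on the number of factors gives the claim. -/

open Polynomial

theorem Polynomial.eval_mul_of_semiconjBy {R : Type*} [Semiring R] (p q : R[X]) {a b : R}
    (h : SemiconjBy (q.eval a) a b) : (p * q).eval a = p.eval b * q.eval a := by
  induction p using Polynomial.induction_on' with
  | add p p' hp hp' => rw [add_mul, eval_add, eval_add, hp, hp', add_mul]
  | monomial n c =>
    rw [eval_monomial, ← C_mul_X_pow_eq_monomial, mul_assoc, eval_C_mul, X_pow_mul, eval_mul_X_pow,
      (h.pow_right n).eq, mul_assoc]

theorem Polynomial.exists_isConj_of_eval_mul_eq_zero {D : Type*} [DivisionRing D] {p q : D[X]}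
    {a : D} (h : (p * q).eval a = 0) : q.eval a = 0 ∨ ∃ b, IsConj a b ∧ p.eval b = 0 := by
  by_cases hq : q.eval a = 0
  · exact .inl hq
  refine .inr ⟨q.eval a * a * (q.eval a)⁻¹, GroupWithZero.isConj_iff₀.mpr ⟨_, hq, rfl⟩, ?_⟩
  have hconj : SemiconjBy (q.eval a) a (q.eval a * a * (q.eval a)⁻¹) := by
    simp [SemiconjBy, mul_assoc, hq]
  rw [eval_mul_of_semiconjBy p q hconj] at h
  exact (mul_eq_zero.mp h).resolve_right hq

theorem Polynomial.exists_isConj_of_eval_prod_X_sub_C_eq_zero {D : Type*} [DivisionRing D]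
    {n : ℕ} (x : Fin n → D) {a : D}
    (h : (List.ofFn fun i => X - C (x i)).prod.eval a = 0) : ∃ i, IsConj (x i) a := by
  induction n with
  | zero => simp at h
  | succ n ih =>
    rw [List.ofFn_succ, List.prod_cons] at h
    rcases exists_isConj_of_eval_mul_eq_zero h with h | ⟨b, hab, hb⟩
    · obtain ⟨i, hi⟩ := ih (fun i => x i.succ) h
      exact ⟨i.succ, hi⟩
    · rw [eval_sub, eval_X, eval_C, sub_eq_zero] at hb
      exact ⟨0, hb ▸ hab.symm⟩

theorem zeros_in_union_of_classes (n : ℕ) (x : Fin n → Quaternion ℝ)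
    (P : Polynomial (Quaternion ℝ))
    (hP : P = (List.ofFn fun i : Fin n => Polynomial.X - Polynomial.C (x i)).prod)
    (q : Quaternion ℝ) (hq : P.eval q = 0) :
    ∃ i : Fin n, ∃ h : Quaternion ℝ, h ≠ 0 ∧ q = h * x i * h⁻¹ := by
  subst hP
  obtain ⟨i, hi⟩ := exists_isConj_of_eval_prod_X_sub_C_eq_zero x hq
  obtain ⟨h, hh, rfl⟩ := GroupWithZero.isConj_iff₀.mp hi
  exact ⟨i, h, hh, rfl⟩
end

section
/- If P(x) = (x − x_n) * ⋯ * (x − x_1) is a factorization of a monic P ∈ ℍ[x] into linear factors, then each congruence class [x_i], i = 1, …, n, contains at least one zero of P. -/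
/-!
A quaternion `t` conjugate to `p` satisfies `t² = (p + p̄) t - p p̄`, because `p + p̄` and `p p̄` are
real. Hence, for `M = p̄ - b`, the conjugate `t = M⁻¹ p M` (or `t = p` if `M = 0`) satisfies
`(t - b) t = p (t - b)`, and then `(T · (x - b))(t) = T(p) (t - b)`. So if `T(p) = 0`, appending the
factor `x - b` on the right keeps a zero in the class of `p`. Starting from the zero `x_i` of
`x - x_i` and appending the factors to its right one at a time gives a zero in `[x_i]` of the part
of the product from `x - x_i` on, and multiplying on the left never destroys zeros.
-/

open Polynomial

namespace Polynomial

variable {R : Type*} [Ring R]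

theorem eval_mul_of_semiconjBy_s10 (p q : R[X]) {t s : R} (h : SemiconjBy (q.eval t) t s) :
    (p * q).eval t = p.eval s * q.eval t := by
  induction p using Polynomial.induction_on' with
  | add f g hf hg => rw [add_mul, eval_add, hf, hg, eval_add, add_mul]
  | monomial k a =>
    rw [← C_mul_X_pow_eq_monomial, mul_assoc, X_pow_mul, eval_C_mul, eval_mul_X_pow,
      (h.pow_right k).eq, eval_C_mul, eval_X_pow, mul_assoc]

theorem eval_mul_eq_zero_of_eval_eq_zero (p : R[X]) {q : R[X]} {t : R} (h : q.eval t = 0) :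
    (p * q).eval t = 0 := by
  rw [eval_mul_of_semiconjBy_s10 p q (s := 0) (h ▸ SemiconjBy.zero_left t 0), h, mul_zero]

end Polynomial

namespace Quaternion

open GroupWithZero

theorem mul_self_eq_of_isConj {p t : Quaternion ℝ} (h : IsConj p t) :
    t * t = (p + star p) * t - p * star p := by
  obtain ⟨c, hc, rfl⟩ := isConj_iff₀.mp h
  have hp : p * p = (p + star p) * p - p * star p := by
    rw [← star_comm_self]; noncomm_ring
  rw [self_add_star', self_mul_star] at hp ⊢
  calc c * p * c⁻¹ * (c * p * c⁻¹) = c * (p * p) * c⁻¹ := by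
        simp only [mul_assoc, inv_mul_cancel_left₀ hc]
    _ = _ := by
        rw [hp, mul_sub, sub_mul, ← mul_assoc c, ← coe_commutes (2 * p.re) c,
          ← coe_commutes (normSq p) c, mul_inv_cancel_right₀ hc]
        simp only [mul_assoc]

theorem exists_isConj_semiconjBy_sub (p b : Quaternion ℝ) :
    ∃ t, IsConj p t ∧ SemiconjBy (t - b) t p := by
  obtain ⟨t, hpt, hMt⟩ : ∃ t, IsConj p t ∧ (star p - b) * t = p * (star p - b) := by
    by_cases hM : star p - b = 0
    · exact ⟨p, IsConj.refl p, by rw [hM, zero_mul, mul_zero]⟩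
    · refine ⟨(star p - b)⁻¹ * p * (star p - b), isConj_iff₀.mpr ⟨_, inv_ne_zero hM, ?_⟩, ?_⟩
      · rw [inv_inv]
      · rw [← mul_assoc, ← mul_assoc, mul_inv_cancel₀ hM, one_mul]
  refine ⟨t, hpt, ?_⟩
  calc (t - b) * t = (p + star p) * t - p * star p - b * t := by
        rw [sub_mul, mul_self_eq_of_isConj hpt]
    _ = (star p - b) * t + p * t - p * star p := by noncomm_ring
    _ = p * (t - b) := by rw [hMt]; noncomm_ring

theorem exists_isConj_eval_mul_X_sub_C_eq_zero {T : (Quaternion ℝ)[X]} {p : Quaternion ℝ}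
    (hp : T.eval p = 0) (b : Quaternion ℝ) :
    ∃ t, IsConj p t ∧ (T * (X - C b)).eval t = 0 := by
  obtain ⟨t, hpt, ht⟩ := exists_isConj_semiconjBy_sub p b
  refine ⟨t, hpt, ?_⟩
  rw [eval_mul_of_semiconjBy_s10 T _ (by simpa using ht), hp, zero_mul]

theorem exists_isConj_eval_mul_prod_eq_zero (l : List (Quaternion ℝ)) {T : (Quaternion ℝ)[X]}
    {p : Quaternion ℝ} (hp : T.eval p = 0) :
    ∃ t, IsConj p t ∧ (T * (l.map fun b => X - C b).prod).eval t = 0 := by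
  induction l generalizing T p with
  | nil => exact ⟨p, IsConj.refl p, by simpa using hp⟩
  | cons b l ih =>
    obtain ⟨t, hpt, ht⟩ := exists_isConj_eval_mul_X_sub_C_eq_zero hp b
    obtain ⟨s, hts, hs⟩ := ih ht
    exact ⟨s, hpt.trans hts, by simpa [mul_assoc] using hs⟩

end Quaternion

open Quaternion GroupWithZero in
theorem each_class_contains_zero (n : ℕ) (x : Fin n → Quaternion ℝ)
    (P : Polynomial (Quaternion ℝ))
    (hP : P = (List.ofFn fun i : Fin n => Polynomial.X - Polynomial.C (x i)).prod) :
    ∀ i : Fin n, ∃ q : Quaternion ℝ,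
      (∃ h : Quaternion ℝ, h ≠ 0 ∧ q = h * x i * h⁻¹) ∧ P.eval q = 0 := by
  intro i
  have hsplit : P = (((List.ofFn x).take i).map fun b => X - C b).prod *
      ((X - C (x i)) * (((List.ofFn x).drop (i + 1)).map fun b => X - C b).prod) := by
    rw [hP, ← List.prod_take_mul_prod_drop _ i, List.drop_eq_getElem_cons (by simp),
      List.prod_cons]
    simp [List.map_ofFn, Function.comp_def]
  obtain ⟨q, hconj, hq⟩ := exists_isConj_eval_mul_prod_eq_zero ((List.ofFn x).drop (i + 1))
    (T := X - C (x i)) (p := x i) (by simp)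
  obtain ⟨h, hh, rfl⟩ := isConj_iff₀.mp hconj
  exact ⟨_, ⟨h, hh, rfl⟩, hsplit ▸ eval_mul_eq_zero_of_eval_eq_zero _ hq⟩
end

section
/- Let q be a non-real zero of P ∈ ℍ[x]. If both q and conj(q) are zeros of P, then every element of the congruence class [q] is a zero of P. -/
/-!
Every point `x` of the sphere `[q]` satisfies the same real quadratic equation
`x ^ 2 = 2 q.re • x - ‖q‖ ^ 2`. Reducing powers with it shows that on `[q]` the polynomial `P`
agrees with an affine function `x ↦ a * x + b`, where `a b` do not depend on `x`. Vanishing at the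
two distinct points `q` and `star q` forces `a * (q - star q) = 0`, hence `a = b = 0`.
-/

open Polynomial

section QuadraticPowers

variable {R A : Type*} [CommSemiring R] [Semiring A] [Algebra R A] (t s : R)

theorem exists_forall_pow_eq_smul_add_algebraMap (n : ℕ) :
    ∃ α β : R, ∀ x : A, x ^ 2 = t • x + algebraMap R A s →
      x ^ n = α • x + algebraMap R A β := by
  induction n with
  | zero => exact ⟨0, 1, fun x _ => by simp⟩
  | succ n ih =>
    obtain ⟨α, β, hαβ⟩ := ih
    refine ⟨α * t + β, α * s, fun x hx => ?_⟩
    calc x ^ (n + 1) = α • x ^ 2 + algebraMap R A β * x := by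
          rw [pow_succ, hαβ x hx, add_mul, smul_mul_assoc, sq]
      _ = (α * t + β) • x + algebraMap R A (α * s) := by
          simp only [hx, Algebra.algebraMap_eq_smul_one, smul_one_mul, smul_add, smul_smul,
            add_smul]
          abel

theorem Polynomial.exists_forall_eval_eq_mul_add (P : A[X]) :
    ∃ a b : A, ∀ x : A, x ^ 2 = t • x + algebraMap R A s → P.eval x = a * x + b := by
  induction P using Polynomial.induction_on' with
  | add P Q hP hQ =>
    obtain ⟨a, b, hP⟩ := hP
    obtain ⟨c, d, hQ⟩ := hQ
    exact ⟨a + c, b + d, fun x hx => by rw [eval_add, hP x hx, hQ x hx]; noncomm_ring⟩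
  | monomial n c =>
    obtain ⟨α, β, hαβ⟩ := exists_forall_pow_eq_smul_add_algebraMap (A := A) t s n
    refine ⟨α • c, c * algebraMap R A β, fun x hx => ?_⟩
    rw [eval_monomial, hαβ x hx, mul_add, mul_smul_comm, smul_mul_assoc]

end QuadraticPowers

namespace Quaternion

variable {R : Type*} [CommRing R]

theorem sq_eq_two_re_smul_sub_normSq (x : ℍ[R]) :
    x ^ 2 = (2 * x.re) • x + algebraMap R ℍ[R] (-normSq x) := by
  calc x ^ 2 = x * (x + star x) - x * star x := by noncomm_ring
    _ = _ := by
      rw [self_add_star', self_mul_star, ← coe_commutes, ← coe_mul_eq_smul]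
      simp [sub_eq_add_neg]

theorem star_ne_self_of_im_ne_zero [NoZeroDivisors R] [CharZero R] {q : ℍ[R]} (hq : q.im ≠ 0) :
    star q ≠ q :=
  fun h => hq (by rw [star_eq_self.mp h, im_coe])

theorem sq_eq_of_re_eq_of_norm_eq {x q : ℍ} (hre : x.re = q.re) (hnorm : ‖x‖ = ‖q‖) :
    x ^ 2 = (2 * q.re) • x + algebraMap ℝ ℍ (-normSq q) := by
  rw [sq_eq_two_re_smul_sub_normSq, hre, normSq_eq_norm_mul_self, normSq_eq_norm_mul_self, hnorm]

end Quaternion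

open Quaternion in
theorem spherical_zero_of_conj_zero (P : Polynomial (Quaternion ℝ)) (q : Quaternion ℝ)
    (hq : q.im ≠ 0) (h1 : P.eval q = 0) (h2 : P.eval (star q) = 0) :
    ∀ p : Quaternion ℝ, p.re = q.re → ‖p‖ = ‖q‖ → P.eval p = 0 := by
  intro p hre hnorm
  obtain ⟨a, b, hP⟩ := P.exists_forall_eval_eq_mul_add (2 * q.re) (-normSq q)
  have hq0 : a * q + b = 0 := (hP q (sq_eq_of_re_eq_of_norm_eq rfl rfl)).symm.trans h1
  have hstar0 : a * star q + b = 0 :=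
    (hP _ (sq_eq_of_re_eq_of_norm_eq (re_star q) (Quaternion.norm_star q))).symm.trans h2
  have ha : a = 0 := by
    have hsub : a * (q - star q) = 0 := by
      rw [mul_sub, ← add_sub_add_right_eq_sub _ _ b, hq0, hstar0, sub_zero]
    exact (mul_eq_zero.mp hsub).resolve_right
      (sub_ne_zero.mpr (star_ne_self_of_im_ne_zero hq).symm)
  rw [ha, zero_mul, zero_add] at hq0
  rw [hP p (sq_eq_of_re_eq_of_norm_eq hre hnorm), ha, hq0, zero_mul, add_zero]
end

section
/- Let q be a non-real quaternion. A polynomial P ∈ ℍ[x] vanishes at both q and conj(q) if and only if the characteristic polynomial Q_q(x) = x² − 2 Re(q) x + |q|² divides P on the right, i.e., P = Q' * Q_q for some Q' ∈ ℍ[x]. -/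
/-!
The characteristic polynomial of `q` has real coefficients, so it is central in `ℍ[X]`: division
with remainder by it can be written on the right, and evaluation is multiplicative on products
whose right factor is central. Hence `P = R + Q' * Q_q` with `deg R ≤ 1`, and `R` vanishes wherever
`P` and `Q_q` do. Both `q` and `conj q` are roots of `Q_q`, and they are distinct since `q` is not
real; a polynomial `a X + b` over a ring without zero divisors with two distinct roots is zero.
-/

open Polynomial

section CentralFactor

variable {K D : Type*} [CommRing K] [Ring D] [Algebra K D]

theorem Polynomial.commute_map_algebraMap_s17 (f : K[X]) (p : D[X]) :
    Commute (f.map (algebraMap K D)) p := by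
  induction f using Polynomial.induction_on' with
  | add f g hf hg => rw [Polynomial.map_add]; exact hf.add_left hg
  | monomial n a =>
    rw [map_monomial, ← C_mul_X_pow_eq_monomial, ← Polynomial.algebraMap_apply]
    exact (Algebra.commute_algebraMap_left a p).mul_left (commute_X_pow p n)

theorem Polynomial.eval_mul_map_algebraMap (p : D[X]) (f : K[X]) (x : D) :
    (p * f.map (algebraMap K D)).eval x = p.eval x * aeval x f := by
  rw [eval, eval₂_mul_noncomm, ← eval, ← eval, eval_map_algebraMap]
  intro k
  rw [coeff_map]
  exact Algebra.commutes _ x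

theorem Polynomial.eq_zero_of_natDegree_le_one_of_eval_eq_zero [NoZeroDivisors D] {p : D[X]}
    (hp : p.natDegree ≤ 1) {x y : D} (hxy : x ≠ y) (hx : p.eval x = 0) (hy : p.eval y = 0) :
    p = 0 := by
  rw [eq_X_add_C_of_natDegree_le_one hp] at hx hy ⊢
  simp only [eval_add, eval_C_mul, eval_C, eval_X] at hx hy
  have ha : p.coeff 1 = 0 := by
    have : p.coeff 1 * (x - y) = 0 := by
      rw [mul_sub, ← add_sub_add_right_eq_sub _ _ (p.coeff 0), hx, hy, sub_zero]
    exact (mul_eq_zero.mp this).resolve_right (sub_ne_zero.mpr hxy)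
  have hb : p.coeff 0 = 0 := by simpa [ha] using hx
  simp [ha, hb]

theorem Polynomial.eval_eq_zero_and_eval_eq_zero_iff_exists_eq_mul_map [NoZeroDivisors D]
    {f : K[X]} (hf : f.Monic) (hdeg : f.natDegree = 2) {x y : D} (hxy : x ≠ y)
    (hfx : aeval x f = 0) (hfy : aeval y f = 0) (P : D[X]) :
    (P.eval x = 0 ∧ P.eval y = 0) ↔ ∃ Q : D[X], P = Q * f.map (algebraMap K D) := by
  have : Nontrivial D := ⟨⟨x, y, hxy⟩⟩
  refine ⟨fun ⟨hPx, hPy⟩ => ?_, fun ⟨Q, hPQ⟩ => by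
    simp only [hPQ, eval_mul_map_algebraMap, hfx, hfy, mul_zero, and_self]⟩
  set g := f.map (algebraMap K D)
  have hg : g.Monic := hf.map _
  have hg_natDegree : g.natDegree = 2 := by rw [hf.natDegree_map, hdeg]
  have hdiv : P %ₘ g + P /ₘ g * g = P := by
    rw [← (commute_map_algebraMap_s17 f (P /ₘ g)).eq]
    exact modByMonic_add_div P g
  have eval_mod : ∀ z : D, aeval z f = 0 → P.eval z = 0 → (P %ₘ g).eval z = 0 := by
    intro z hfz hPz
    have := congrArg (eval z) hdiv
    rwa [eval_add, eval_mul_map_algebraMap, hfz, mul_zero, add_zero, hPz] at this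
  have hmod_natDegree : (P %ₘ g).natDegree ≤ 1 := by
    have hg_ne_one : g ≠ 1 := fun h => by simp [h] at hg_natDegree
    have := natDegree_modByMonic_lt P hg hg_ne_one
    omega
  have hmod : P %ₘ g = 0 :=
    eq_zero_of_natDegree_le_one_of_eval_eq_zero hmod_natDegree hxy
      (eval_mod x hfx hPx) (eval_mod y hfy hPy)
  exact ⟨P /ₘ g, by rw [hmod, zero_add] at hdiv; exact hdiv.symm⟩

end CentralFactor

namespace Quaternion

variable {R : Type*} [CommRing R]

noncomputable def charPoly (q : ℍ[R]) : R[X] :=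
  X ^ 2 - C (2 * q.re) * X + C (normSq q)

theorem charPoly_monic (q : ℍ[R]) : (charPoly q).Monic := by
  unfold charPoly
  monicity!

theorem natDegree_charPoly [Nontrivial R] (q : ℍ[R]) : (charPoly q).natDegree = 2 := by
  unfold charPoly
  compute_degree!

theorem aeval_charPoly_self (q : ℍ[R]) : aeval q (charPoly q) = 0 := by
  rw [charPoly, map_add, map_sub, map_mul, map_pow, aeval_X, aeval_C, aeval_C, algebraMap_def,
    ← self_add_star', ← star_mul_self, sq]
  noncomm_ring

theorem charPoly_star (q : ℍ[R]) : charPoly (star q) = charPoly q := by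
  simp [charPoly, normSq_star]

theorem map_charPoly (q : ℍ[ℝ]) : (charPoly q).map (algebraMap ℝ ℍ[ℝ]) =
    X ^ 2 - C ((2 * q.re : ℝ) : ℍ[ℝ]) * X + C ((‖q‖ ^ 2 : ℝ) : ℍ[ℝ]) := by
  simp [charPoly, normSq_eq_norm_mul_self, sq]

end Quaternion

theorem conj_pair_zero_iff_charPoly_dvd (P : Polynomial (Quaternion ℝ)) (q : Quaternion ℝ)
    (hq : q.im ≠ 0) :
    (P.eval q = 0 ∧ P.eval (star q) = 0) ↔
      ∃ Q' : Polynomial (Quaternion ℝ),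
        P = Q' * (Polynomial.X ^ 2
          - Polynomial.C ((2 * q.re : ℝ) : Quaternion ℝ) * Polynomial.X
          + Polynomial.C ((‖q‖ ^ 2 : ℝ) : Quaternion ℝ)) := by
  rw [← Quaternion.map_charPoly]
  refine eval_eq_zero_and_eval_eq_zero_iff_exists_eq_mul_map (Quaternion.charPoly_monic q)
    (Quaternion.natDegree_charPoly q) (Quaternion.star_ne_self_of_im_ne_zero hq).symm
    (Quaternion.aeval_charPoly_self q) ?_ P
  rw [← Quaternion.charPoly_star]
  exact Quaternion.aeval_charPoly_self (star q)
end

section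
/- For x_1, x_2 ∈ ℍ with h := conj(x_2) − x_1 ≠ 0, the factors of a quadratic can be swapped up to conjugation: (x − x_2)*(x − x_1) = (x − h^{-1} x_1 h)*(x − h^{-1} x_2 h). If h = 0, then (x − x_2)*(x − x_1) = (x − x_1)*(x − x_2). -/
open Polynomial

private lemma quad_expand (u v : Quaternion ℝ) :
    (X - C v) * (X - C u) = X ^ 2 - C (u + v) * X + C (v * u) := by
  rw [sub_mul, mul_sub, mul_sub, Polynomial.X_mul_C, ← Polynomial.C_mul,
    Polynomial.C_add, add_mul, sq]
  abel

private lemma quad_eq (a b c d : Quaternion ℝ) (hs : a + b = c + d) (hp : b * a = d * c) :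
    (X - C b) * (X - C a) = (X - C d) * (X - C c) := by
  rw [quad_expand, quad_expand, hs, hp]

theorem swap_linear_factors (x₁ x₂ : Quaternion ℝ) (h : Quaternion ℝ)
    (hh : h = star x₂ - x₁) :
    (h ≠ 0 →
      (Polynomial.X - Polynomial.C x₂) * (Polynomial.X - Polynomial.C x₁) =
        (Polynomial.X - Polynomial.C (h⁻¹ * x₁ * h)) *
          (Polynomial.X - Polynomial.C (h⁻¹ * x₂ * h))) ∧
    (h = 0 →
      (Polynomial.X - Polynomial.C x₂) * (Polynomial.X - Polynomial.C x₁) =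
        (Polynomial.X - Polynomial.C x₁) * (Polynomial.X - Polynomial.C x₂)) := by
  constructor
  · intro hne
    have K1 : h * (x₂ + x₁) = (x₂ + x₁) * h := by
      subst hh
      ext <;> simp [Quaternion.re_mul, Quaternion.imI_mul, Quaternion.imJ_mul,
        Quaternion.imK_mul] <;> ring
    have K2 : h * (x₂ * x₁) = (x₁ * x₂) * h := by
      subst hh
      ext <;> simp [Quaternion.re_mul, Quaternion.imI_mul, Quaternion.imJ_mul,
        Quaternion.imK_mul] <;> ring
    apply quad_eq
    · have : h⁻¹ * x₂ * h + h⁻¹ * x₁ * h = h⁻¹ * (h * (x₂ + x₁)) := by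
        rw [K1]; simp only [add_mul, mul_add, mul_assoc]
      rw [this, ← mul_assoc, inv_mul_cancel₀ hne, one_mul, add_comm]
    · have : h⁻¹ * x₁ * h * (h⁻¹ * x₂ * h) = h⁻¹ * (x₁ * x₂) * h := by
        simp only [mul_assoc]
        rw [← mul_assoc h h⁻¹, mul_inv_cancel₀ hne, one_mul]
      rw [this, mul_assoc, ← K2, ← mul_assoc, inv_mul_cancel₀ hne, one_mul]
  · intro h0
    have hx : x₁ = star x₂ := by
      have := hh.symm.trans h0
      linear_combination (norm := module) -this
    apply quad_eq
    · exact add_comm _ _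
    · subst hx
      ext <;> simp [Quaternion.re_mul, Quaternion.imI_mul, Quaternion.imJ_mul,
        Quaternion.imK_mul] <;> ring
end

section
/- Let P(x) = (x − x_2)*(x − x_1) with x_1, x_2 ∈ ℍ \ ℝ, [x_1] = [x_2], and x_1 ≠ conj(x_2). Then the only zero of P is x_1. -/
open Polynomial Quaternion

private lemma re_mul_comm (a b : Quaternion ℝ) : (a * b).re = (b * a).re := by
  simp [Quaternion.re_mul]; ring

theorem double_isolated_root (x₁ x₂ : Quaternion ℝ)
    (h1 : x₁.im ≠ 0) (h2 : x₂.im ≠ 0)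
    (hre : x₁.re = x₂.re) (hnorm : ‖x₁‖ = ‖x₂‖) (hne : x₁ ≠ star x₂) :
    ∀ q : Quaternion ℝ,
      ((Polynomial.X - Polynomial.C x₂) * (Polynomial.X - Polynomial.C x₁)).eval q = 0
        ↔ q = x₁ := by
  intro q
  have hp : (X - C x₂) * (X - C x₁)
      = C 1 * (X * X) - C (x₂ + x₁) * X + C (x₂ * x₁) := by
    rw [sub_mul, mul_sub, mul_sub, X_mul_C, C_add, add_mul, C_mul, C_1, one_mul]
    abel
  have key : ((X - C x₂) * (X - C x₁)).eval q
      = q * q - (x₂ + x₁) * q + x₂ * x₁ := by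
    rw [hp, eval_add, eval_sub, eval_C_mul, eval_C_mul, eval_mul_X, eval_X, eval_C, one_mul]
  rw [key]
  constructor
  · intro h
    by_contra hq
    have hc : q - x₁ ≠ 0 := sub_ne_zero.mpr hq
    set c := q - x₁ with hcdef
    -- x₂ * c = c * q
    have h1' : x₂ * c = c * q := by
      have e : x₂ * c - c * q = -(q * q - (x₂ + x₁) * q + x₂ * x₁) := by
        rw [hcdef]; noncomm_ring
      rw [h, neg_zero, sub_eq_zero] at e
      exact e
    have hq2 : q = c⁻¹ * (x₂ * c) := by
      rw [h1', ← mul_assoc, inv_mul_cancel₀ hc, one_mul]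
    -- re q = re x₂
    have hreq : q.re = x₂.re := by
      rw [hq2, re_mul_comm, mul_assoc, mul_inv_cancel₀ hc, mul_one]
    -- normSq q = normSq x₂
    have hcc : normSq c⁻¹ * normSq c = 1 := by
      rw [← map_mul, inv_mul_cancel₀ hc, map_one]
    have hnq : normSq q = normSq x₂ := by
      rw [hq2, map_mul, map_mul, mul_comm (normSq x₂), ← mul_assoc, hcc, one_mul]
    have hn12 : normSq x₁ = normSq x₂ := by
      rw [normSq_eq_norm_mul_self, normSq_eq_norm_mul_self, hnorm]
    -- characteristic polynomial of q
    have hchar : q * q = ((2 * q.re : ℝ) : Quaternion ℝ) * q - ((normSq q : ℝ) : Quaternion ℝ) := by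
      have : q * q = (q + star q) * q - star q * q := by noncomm_ring
      rw [this, self_add_star', star_mul_self]
    -- c * q = star x₁ * c
    have h2' : c * q = star x₁ * c := by
      have e1 : c * q = q * q - x₁ * q := by rw [hcdef]; noncomm_ring
      rw [e1, hchar, hreq, ← hre, hnq, ← hn12]
      have e2 : ((2 * x₁.re : ℝ) : Quaternion ℝ) = x₁ + star x₁ := (self_add_star' x₁).symm
      have e3 : ((normSq x₁ : ℝ) : Quaternion ℝ) = star x₁ * x₁ := (star_mul_self x₁).symm
      rw [e2, e3, hcdef]
      noncomm_ring
    have : x₂ = star x₁ := mul_right_cancel₀ hc (h1'.trans h2')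
    exact hne (by rw [this, star_star])
  · intro h
    rw [h]
    noncomm_ring
end
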